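/- For n ≥ 2, no finite sum of ReLU units Σᵢ aᵢ max(0, wᵢᵀx + bᵢ) (a one-hidden-layer ReLU network) can equal the function g(x) = max(0, 1 − ‖x‖_∞) on all of ℝⁿ. -/
import Mathlib


open MeasureTheory

/-- Auxiliary: sum against a `Pi.single`. -/
private lemma sum_mul_single {n : ℕ} (w : Fin n → ℝ) (i : Fin n) (t : ℝ) :
    ∑ j, w j * (Pi.single i t : Fin n → ℝ) j = w i * t := by
  rw [Finset.sum_eq_single i]
  · simp
  · intro j _ hj
    rw [Pi.single_eq_of_ne hj, mul_zero]
  · simp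

/-- In dimension `n ≥ 2`, every vector has a unit vector orthogonal to it
(orthogonal in the dot-product sense). -/
private lemma exists_unit_orth {n : ℕ} (hn : 2 ≤ n) (w : Fin n → ℝ) :
    ∃ u : Fin n → ℝ, ‖u‖ = 1 ∧ ∑ j, w j * u j = 0 := by
  set i0 : Fin n := ⟨0, by omega⟩
  set i1 : Fin n := ⟨1, by omega⟩
  have h01 : i0 ≠ i1 := by
    simp only [i0, i1, Fin.mk.injEq, ne_eq]
    omega
  by_cases h : w i0 = 0 ∧ w i1 = 0
  · refine ⟨Pi.single i0 1, ?_, ?_⟩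
    · rw [Pi.norm_single]; simp
    · rw [sum_mul_single, h.1, zero_mul]
  · set u0 : Fin n → ℝ := Pi.single i0 (w i1) - Pi.single i1 (w i0) with hu0
    have hu0sum : ∑ j, w j * u0 j = 0 := by
      have heq : ∀ j, w j * u0 j
          = w j * (Pi.single i0 (w i1) : Fin n → ℝ) j
            - w j * (Pi.single i1 (w i0) : Fin n → ℝ) j := by
        intro j; simp [hu0, mul_sub]
      simp_rw [heq, Finset.sum_sub_distrib, sum_mul_single]
      ring
    have hu0ne : u0 ≠ 0 := by
      intro hc
      apply h
      constructor
      · have := congrFun hc i1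
        simpa [hu0, Pi.single_eq_of_ne h01.symm, Pi.single_eq_same] using this
      · have := congrFun hc i0
        simpa [hu0, Pi.single_eq_of_ne h01, Pi.single_eq_same] using this
    refine ⟨(‖u0‖⁻¹ : ℝ) • u0, norm_smul_inv_norm (𝕜 := ℝ) hu0ne, ?_⟩
    have heq : ∀ j, w j * ((‖u0‖⁻¹ : ℝ) • u0) j = ‖u0‖⁻¹ * (w j * u0 j) := by
      intro j; simp [Pi.smul_apply]; ring
    simp_rw [heq, ← Finset.mul_sum, hu0sum, mul_zero]

theorem stmt_16 (n : ℕ) (hn : 2 ≤ n) :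
    ¬ ∃ (m : ℕ) (a : Fin m → ℝ) (w : Fin m → Fin n → ℝ) (b : Fin m → ℝ),
      ∀ x : Fin n → ℝ,
        max 0 (1 - ‖x‖) = ∑ i, a i * max 0 (∑ j, w i j * x j + b i) := by
  rintro ⟨m, a, w, b, hf⟩
  -- choose for each unit a unit vector orthogonal to its weight vector
  choose u hu1 hu2 using fun i : Fin m => exists_unit_orth hn (w i)
  -- translation vectors with rapidly growing norms
  set v : Fin m → Fin n → ℝ := fun i => ((3 : ℝ) ^ (i : ℕ)) • u i with hv
  have hvnorm : ∀ i, ‖v i‖ = 3 ^ (i : ℕ) := by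
    intro i
    show ‖((3 : ℝ) ^ (i : ℕ)) • u i‖ = _
    simp only [norm_smul, hu1, mul_one]
    rw [Real.norm_eq_abs, abs_of_pos (by positivity)]
  have hvorth : ∀ i, ∑ j, w i j * v i j = 0 := by
    intro i
    have heq : ∀ j, w i j * v i j = (3 : ℝ) ^ (i : ℕ) * (w i j * u i j) := by
      intro j; show w i j * (((3 : ℝ) ^ (i : ℕ)) • u i) j = _
      simp [Pi.smul_apply]; ring
    simp_rw [heq, ← Finset.mul_sum, hu2, mul_zero]
  -- the subset-sum points
  set P : Finset (Fin m) → (Fin n → ℝ) := fun s => ∑ j ∈ s, v j with hP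
  -- the alternating sum
  set S : ℝ := ∑ s : Finset (Fin m), (-1 : ℝ) ^ s.card * max 0 (1 - ‖P s‖) with hS
  -- Step 1 : S = 0 because each unit is annihilated by the alternating sum
  have hS0 : S = 0 := by
    have hswap : S = ∑ i : Fin m, ∑ s : Finset (Fin m),
        (-1 : ℝ) ^ s.card * (a i * max 0 (∑ j, w i j * P s j + b i)) := by
      rw [hS]
      simp_rw [hf, Finset.mul_sum]
      rw [Finset.sum_comm]
    rw [hswap]
    refine Finset.sum_eq_zero fun i _ => ?_
    classical
    have hins : ∀ s : Finset (Fin m), i ∉ s →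
        (-1 : ℝ) ^ (insert i s).card *
          (a i * max 0 (∑ j, w i j * P (insert i s) j + b i))
        = -((-1 : ℝ) ^ s.card * (a i * max 0 (∑ j, w i j * P s j + b i))) := by
      intro s hi
      have hcard : (insert i s).card = s.card + 1 := Finset.card_insert_of_notMem hi
      have hPval : ∀ j, P (insert i s) j = v i j + P s j := by
        intro j
        show (∑ t ∈ insert i s, v t) j = v i j + (∑ t ∈ s, v t) j
        rw [Finset.sum_insert hi]
        simp [Finset.sum_apply]
      have hval : (∑ j, w i j * P (insert i s) j) = ∑ j, w i j * P s j := by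
        simp_rw [hPval, mul_add, Finset.sum_add_distrib]
        rw [hvorth i, zero_add]
      rw [hcard, hval]
      ring
    refine Finset.sum_ninvolution
      (fun s => if i ∈ s then s.erase i else insert i s) ?_ ?_
      (fun s => Finset.mem_univ _) ?_
    · intro s
      by_cases hi : i ∈ s
      · obtain ⟨t, hit, rfl⟩ : ∃ t, i ∉ t ∧ s = insert i t :=
          ⟨s.erase i, Finset.notMem_erase i s, (Finset.insert_erase hi).symm⟩
        simp only [hi, if_true, Finset.erase_insert hit]
        rw [hins t hit]
        ring
      · simp only [hi, if_false]
        rw [hins s hi]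
        ring
    · intro s _
      by_cases hi : i ∈ s
      · simp only [hi, if_true]
        intro hc
        exact (Finset.notMem_erase i s) (hc.symm ▸ hi)
      · simp only [hi, if_false]
        intro hc
        exact hi (hc ▸ Finset.mem_insert_self i s)
    · intro s
      by_cases hi : i ∈ s
      · simp [hi, Finset.notMem_erase, Finset.insert_erase hi]
      · simp [hi, Finset.erase_insert hi]
  -- Step 2 : S = 1
  have hnorm_big : ∀ s : Finset (Fin m), s.Nonempty → 1 ≤ ‖P s‖ := by
    intro s hs
    set k := s.max' hs with hk
    have hkmem : k ∈ s := s.max'_mem hs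
    have hsplit : P s = v k + ∑ j ∈ s.erase k, v j :=
      (Finset.add_sum_erase s v hkmem).symm
    have hrest : ‖∑ j ∈ s.erase k, v j‖ ≤ ((3 : ℝ) ^ (k : ℕ) - 1) / 2 := by
      calc ‖∑ j ∈ s.erase k, v j‖ ≤ ∑ j ∈ s.erase k, ‖v j‖ :=
            norm_sum_le _ _
        _ = ∑ j ∈ s.erase k, (3 : ℝ) ^ (j : ℕ) := by simp_rw [hvnorm]
        _ = ∑ t ∈ (s.erase k).image Fin.val, (3 : ℝ) ^ t := by
            rw [Finset.sum_image (fun x _ y _ h => Fin.val_injective h)]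
        _ ≤ ∑ t ∈ Finset.range (k : ℕ), (3 : ℝ) ^ t := by
            refine Finset.sum_le_sum_of_subset_of_nonneg ?_ (fun t _ _ => by positivity)
            intro t ht
            simp only [Finset.mem_image] at ht
            obtain ⟨j, hj, rfl⟩ := ht
            rw [Finset.mem_range]
            have hjk : j ≤ k := s.le_max' j (Finset.mem_of_mem_erase hj)
            have hjne : (j : ℕ) ≠ (k : ℕ) :=
              fun hc => (Finset.ne_of_mem_erase hj) (Fin.val_injective hc)
            exact lt_of_le_of_ne (Fin.le_def.mp hjk) hjne
        _ = ((3 : ℝ) ^ (k : ℕ) - 1) / 2 := by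
            rw [geom_sum_eq (by norm_num : (3:ℝ) ≠ 1)]
            norm_num
    have h3k : (1 : ℝ) ≤ 3 ^ (k : ℕ) := one_le_pow₀ (by norm_num)
    calc (1 : ℝ) ≤ 3 ^ (k : ℕ) - ((3 : ℝ) ^ (k : ℕ) - 1) / 2 := by linarith
      _ ≤ ‖v k‖ - ‖∑ j ∈ s.erase k, v j‖ := by rw [hvnorm]; linarith
      _ ≤ ‖v k + ∑ j ∈ s.erase k, v j‖ := by
          have h2 := norm_sub_norm_le (v k) (-(∑ j ∈ s.erase k, v j))
          simpa [sub_neg_eq_add, norm_neg] using h2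
      _ = ‖P s‖ := by rw [hsplit]
  have hS1 : S = 1 := by
    rw [hS]
    rw [← Finset.add_sum_erase _ _ (Finset.mem_univ (∅ : Finset (Fin m)))]
    have h0 : (-1 : ℝ) ^ (∅ : Finset (Fin m)).card * max 0 (1 - ‖P ∅‖) = 1 := by
      have : P ∅ = 0 := by simp [hP]
      rw [this]
      simp
    rw [h0]
    have hrest : ∑ s ∈ Finset.univ.erase (∅ : Finset (Fin m)),
        (-1 : ℝ) ^ s.card * max 0 (1 - ‖P s‖) = 0 := by
      refine Finset.sum_eq_zero fun s hs => ?_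
      have hne : s.Nonempty := by
        rcases Finset.eq_empty_or_nonempty s with rfl | h
        · exact absurd rfl (Finset.ne_of_mem_erase hs)
        · exact h
      have hz : max 0 (1 - ‖P s‖) = 0 := by
        rw [max_eq_left]
        linarith [hnorm_big s hne]
      rw [hz, mul_zero]
    rw [hrest, add_zero]
  rw [hS0] at hS1
  norm_num at hS1
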